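/- Let F and B be n × n column-stochastic matrices, let 0 < α₁, α₂, α₃ < 1, and let d ∈ ℝⁿ. Then the solution of the RepRank equation t = α₁ F P₊(t) + α₂ B P₋(t) + α₃ d is unique: if both t and t' satisfy the equation, then t = t'. -/

import Mathlib

open Finset Filter

/-- Replace negative components by zero. -/
def Ppos {n : ℕ} (t : Fin n → ℝ) : Fin n → ℝ := fun i => max (t i) 0

/-- Replace positive components by zero. -/
def Pneg {n : ℕ} (t : Fin n → ℝ) : Fin n → ℝ := fun i => min (t i) 0

/-- ℓ¹ norm on ℝⁿ. -/
def l1 {n : ℕ} (x : Fin n → ℝ) : ℝ := ∑ i, |x i|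

/-- A matrix is column-stochastic if entries are nonnegative and each column sums to 1. -/
def ColStochastic {n : ℕ} (F : Matrix (Fin n) (Fin n) ℝ) : Prop :=
  (∀ i j, 0 ≤ F i j) ∧ ∀ j, ∑ i, F i j = 1

/-!
The RepRank map `t ↦ α₁ F P₊(t) + α₂ B P₋(t) + α₃ d` is a contraction for the ℓ¹ norm with
constant `max α₁ α₂ < 1`: column-stochastic matrices do not increase the ℓ¹ norm, and the
differences `P₊ t - P₊ t'` and `P₋ t - P₋ t'` split `|t - t'|` componentwise, since at each
coordinate both have the sign of `t i - t' i`. A contraction has at most one fixed point.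
-/

open scoped Matrix

section L1

variable {n : ℕ}

lemma l1_nonneg (x : Fin n → ℝ) : 0 ≤ l1 x :=
  sum_nonneg fun i _ => abs_nonneg (x i)

lemma l1_eq_zero_iff {x : Fin n → ℝ} : l1 x = 0 ↔ x = 0 := by
  simp only [l1, sum_eq_zero_iff_of_nonneg fun i _ => abs_nonneg (x i), mem_univ,
    true_implies, abs_eq_zero, funext_iff, Pi.zero_apply]

lemma l1_add_le (x y : Fin n → ℝ) : l1 (x + y) ≤ l1 x + l1 y := by
  rw [l1, l1, l1, ← sum_add_distrib]
  exact sum_le_sum fun i _ => abs_add_le (x i) (y i)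

lemma l1_smul (c : ℝ) (x : Fin n → ℝ) : l1 (c • x) = |c| * l1 x := by
  simp [l1, mul_sum, abs_mul]

lemma eq_zero_of_l1_le_mul {x : Fin n → ℝ} {c : ℝ} (hc : c < 1) (hx : l1 x ≤ c * l1 x) :
    x = 0 :=
  l1_eq_zero_iff.mp <| le_antisymm (by nlinarith [l1_nonneg x]) (l1_nonneg x)

lemma ColStochastic.l1_mulVec_le {M : Matrix (Fin n) (Fin n) ℝ} (hM : ColStochastic M)
    (x : Fin n → ℝ) : l1 (M *ᵥ x) ≤ l1 x :=
  calc l1 (M *ᵥ x) ≤ ∑ i, ∑ j, M i j * |x j| := by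
        refine sum_le_sum fun i _ => (abs_sum_le_sum_abs (fun j => M i j * x j) univ).trans_eq ?_
        simp only [abs_mul, abs_of_nonneg (hM.1 i _)]
    _ = ∑ j, (∑ i, M i j) * |x j| := by simp only [sum_mul]; exact sum_comm
    _ = l1 x := by simp [hM.2, l1]

lemma abs_max_sub_max_add_abs_min_sub_min (a b : ℝ) :
    |max a 0 - max b 0| + |min a 0 - min b 0| = |a - b| := by
  have ha := max_add_min a 0
  have hb := max_add_min b 0
  rcases le_total a b with h | h
  · have h₁ : max a 0 ≤ max b 0 := max_le_max_right 0 h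
    have h₂ : min a 0 ≤ min b 0 := min_le_min_right 0 h
    rw [abs_of_nonpos (by linarith), abs_of_nonpos (by linarith), abs_of_nonpos (by linarith)]
    linarith
  · have h₁ : max b 0 ≤ max a 0 := max_le_max_right 0 h
    have h₂ : min b 0 ≤ min a 0 := min_le_min_right 0 h
    rw [abs_of_nonneg (by linarith), abs_of_nonneg (by linarith), abs_of_nonneg (by linarith)]
    linarith

lemma l1_Ppos_sub_add_l1_Pneg_sub (t t' : Fin n → ℝ) :
    l1 (Ppos t - Ppos t') + l1 (Pneg t - Pneg t') = l1 (t - t') := by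
  rw [l1, l1, l1, ← sum_add_distrib]
  exact sum_congr rfl fun i _ => abs_max_sub_max_add_abs_min_sub_min (t i) (t' i)

end L1

section RepRank

variable {n : ℕ} {F B : Matrix (Fin n) (Fin n) ℝ} {α₁ α₂ : ℝ}

def repRankMap (F B : Matrix (Fin n) (Fin n) ℝ) (α₁ α₂ α₃ : ℝ) (d t : Fin n → ℝ) :
    Fin n → ℝ :=
  α₁ • (F *ᵥ Ppos t) + α₂ • (B *ᵥ Pneg t) + α₃ • d

lemma l1_repRankMap_sub_le (hF : ColStochastic F) (hB : ColStochastic B)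
    (hα₁ : 0 ≤ α₁) (hα₂ : 0 ≤ α₂) (α₃ : ℝ) (d t t' : Fin n → ℝ) :
    l1 (repRankMap F B α₁ α₂ α₃ d t - repRankMap F B α₁ α₂ α₃ d t') ≤
      max α₁ α₂ * l1 (t - t') := by
  set p := Ppos t - Ppos t'
  set q := Pneg t - Pneg t'
  have hdiff : repRankMap F B α₁ α₂ α₃ d t - repRankMap F B α₁ α₂ α₃ d t' =
      α₁ • (F *ᵥ p) + α₂ • (B *ᵥ q) := by
    simp only [repRankMap, p, q, Matrix.mulVec_sub]
    module
  calc _ ≤ l1 (α₁ • (F *ᵥ p)) + l1 (α₂ • (B *ᵥ q)) := hdiff ▸ l1_add_le _ _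
    _ = α₁ * l1 (F *ᵥ p) + α₂ * l1 (B *ᵥ q) := by
        rw [l1_smul, l1_smul, abs_of_nonneg hα₁, abs_of_nonneg hα₂]
    _ ≤ α₁ * l1 p + α₂ * l1 q := by
        gcongr
        exacts [hF.l1_mulVec_le p, hB.l1_mulVec_le q]
    _ ≤ max α₁ α₂ * l1 p + max α₁ α₂ * l1 q := by
        gcongr
        exacts [l1_nonneg p, le_max_left α₁ α₂, l1_nonneg q, le_max_right α₁ α₂]
    _ = max α₁ α₂ * l1 (t - t') := by rw [← mul_add, l1_Ppos_sub_add_l1_Pneg_sub]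

end RepRank

theorem repRank_unique_general {n : ℕ} (F B : Matrix (Fin n) (Fin n) ℝ)
    (hF : ColStochastic F) (hB : ColStochastic B)
    (α₁ α₂ α₃ : ℝ) (hα₁ : 0 < α₁) (hα₁' : α₁ < 1) (hα₂ : 0 < α₂) (hα₂' : α₂ < 1)
    (d : Fin n → ℝ) (t t' : Fin n → ℝ)
    (ht : t = α₁ • F.mulVec (Ppos t) + α₂ • B.mulVec (Pneg t) + α₃ • d)
    (ht' : t' = α₁ • F.mulVec (Ppos t') + α₂ • B.mulVec (Pneg t') + α₃ • d) :
    t = t' := by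
  have hcontract := l1_repRankMap_sub_le hF hB hα₁.le hα₂.le α₃ d t t'
  rw [repRankMap, repRankMap, ← ht, ← ht'] at hcontract
  exact sub_eq_zero.mp (eq_zero_of_l1_le_mul (max_lt hα₁' hα₂') hcontract)

theorem repRank_unique {n : ℕ} (F B : Matrix (Fin n) (Fin n) ℝ)
    (hF : ColStochastic F) (hB : ColStochastic B)
    (α₁ α₂ α₃ : ℝ) (hα₁ : 0 < α₁) (hα₁' : α₁ < 1) (hα₂ : 0 < α₂) (hα₂' : α₂ < 1)
    (hα₃ : 0 < α₃) (hα₃' : α₃ < 1) (d : Fin n → ℝ) (t t' : Fin n → ℝ)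
    (ht : t = α₁ • F.mulVec (Ppos t) + α₂ • B.mulVec (Pneg t) + α₃ • d)
    (ht' : t' = α₁ • F.mulVec (Ppos t') + α₂ • B.mulVec (Pneg t') + α₃ • d) :
    t = t' :=
  repRank_unique_general F B hF hB α₁ α₂ α₃ hα₁ hα₁' hα₂ hα₂' d t t' ht ht'
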